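/- The map Φ sending U to (u/w, 1/w), where U = wP + vE + u is the unique decomposition with w, v ∈ ℝ and u ∈ W, is a bijection from the sheet H⁺ = {U ∈ V : ⟨U,U⟩ = 1, ⟨U,E⟩ > 0} of the unit hyperboloid onto W × (0,∞). -/

import Mathlib

/-!
Write `w = ⟨U,E⟩`, `v = ⟨U,P⟩` and `u = U - wP - vE ∈ W`. Because `E` and `P` are null with
`⟨P,E⟩ = 1`, one has `⟨U,U⟩ = ⟨u,u⟩ + 2wv`, so on the hyperboloid `v = (1 - ⟨u,u⟩) / (2w)` is
determined by `u` and `w`. Hence `(y, t) ↦ t⁻¹P + ((t - t⁻¹⟨y,y⟩) / 2)E + t⁻¹y` is a two-sided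
inverse of `U ↦ (u/w, 1/w)`.
-/

/-- The Minkowski bilinear form of signature `(1, n)` on `ℝ^{n+1}`:
`⟨x, y⟩ = x₀y₀ − x₁y₁ − ⋯ − xₙyₙ`. -/
noncomputable def mink (n : ℕ) (x y : Fin (n + 1) → ℝ) : ℝ :=
  x 0 * y 0 - ∑ i : Fin n, x i.succ * y i.succ

namespace LinearMap.BilinForm

section CommRing

variable {R M : Type*} [CommRing R] [AddCommGroup M] [Module R M]
  {B : LinearMap.BilinForm R M} {E P : M}

variable (B E P) in
def orthogonalPart (U : M) : M := U - B U E • P - B U P • E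

theorem orthogonalPart_apply_E (hE : B E E = 0) (hPE : B P E = 1) (U : M) :
    B (B.orthogonalPart E P U) E = 0 := by
  simp [orthogonalPart, hE, hPE]

theorem orthogonalPart_apply_P (hB : B.IsSymm) (hP : B P P = 0) (hPE : B P E = 1) (U : M) :
    B (B.orthogonalPart E P U) P = 0 := by
  simp [orthogonalPart, hP, hB.eq E P, hPE]

theorem apply_self_eq_orthogonalPart_add (hB : B.IsSymm) (hE : B E E = 0) (hP : B P P = 0)
    (hPE : B P E = 1) (U : M) :
    B U U = B (B.orthogonalPart E P U) (B.orthogonalPart E P U) + 2 * B U E * B U P := by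
  simp only [orthogonalPart, map_sub, map_smul, LinearMap.sub_apply, smul_eq_mul, smul_apply,
    hB.eq P U, hB.eq E U, hB.eq E P, hE, hP, hPE]
  ring

end CommRing

section Field

variable {K M : Type*} [Field K] [AddCommGroup M] [Module K M]
  {B : LinearMap.BilinForm K M} {E P : M}

variable (B E P) in
noncomputable def toUpperHalfSpace (U : M) : M × K :=
  ((B U E)⁻¹ • B.orthogonalPart E P U, (B U E)⁻¹)

variable (B E P) in
noncomputable def ofUpperHalfSpace (x : M × K) : M :=
  x.2⁻¹ • P + ((x.2 - x.2⁻¹ * B x.1 x.1) / 2) • E + x.2⁻¹ • x.1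

theorem ofUpperHalfSpace_apply_E (hE : B E E = 0) (hPE : B P E = 1) {y : M}
    (hy : B y E = 0) (t : K) : B (B.ofUpperHalfSpace E P (y, t)) E = t⁻¹ := by
  simp [ofUpperHalfSpace, hE, hPE, hy]

theorem ofUpperHalfSpace_apply_P (hB : B.IsSymm) (hP : B P P = 0) (hPE : B P E = 1)
    {y : M} (hy : B y P = 0) (t : K) :
    B (B.ofUpperHalfSpace E P (y, t)) P = (t - t⁻¹ * B y y) / 2 := by
  simp [ofUpperHalfSpace, hP, hB.eq E P, hPE, hy]

theorem orthogonalPart_ofUpperHalfSpace (hB : B.IsSymm) (hE : B E E = 0) (hP : B P P = 0)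
    (hPE : B P E = 1) {y : M} (hyE : B y E = 0) (hyP : B y P = 0) (t : K) :
    B.orthogonalPart E P (B.ofUpperHalfSpace E P (y, t)) = t⁻¹ • y := by
  rw [orthogonalPart, ofUpperHalfSpace_apply_E hE hPE hyE,
    ofUpperHalfSpace_apply_P hB hP hPE hyP, ofUpperHalfSpace]
  abel

theorem ofUpperHalfSpace_apply_self [NeZero (2 : K)] (hB : B.IsSymm) (hE : B E E = 0)
    (hP : B P P = 0) (hPE : B P E = 1) {y : M} (hyE : B y E = 0) (hyP : B y P = 0) {t : K}
    (ht : t ≠ 0) : B (B.ofUpperHalfSpace E P (y, t)) (B.ofUpperHalfSpace E P (y, t)) = 1 := by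
  rw [apply_self_eq_orthogonalPart_add hB hE hP hPE,
    orthogonalPart_ofUpperHalfSpace hB hE hP hPE hyE hyP, ofUpperHalfSpace_apply_E hE hPE hyE,
    ofUpperHalfSpace_apply_P hB hP hPE hyP]
  simp only [smul_left, smul_right]
  field_simp
  ring

theorem toUpperHalfSpace_ofUpperHalfSpace (hB : B.IsSymm) (hE : B E E = 0) (hP : B P P = 0)
    (hPE : B P E = 1) {y : M} (hyE : B y E = 0) (hyP : B y P = 0) {t : K} (ht : t ≠ 0) :
    B.toUpperHalfSpace E P (B.ofUpperHalfSpace E P (y, t)) = (y, t) := by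
  simp [toUpperHalfSpace, ofUpperHalfSpace_apply_E hE hPE hyE,
    orthogonalPart_ofUpperHalfSpace hB hE hP hPE hyE hyP, smul_smul, ht]

theorem ofUpperHalfSpace_toUpperHalfSpace [NeZero (2 : K)] (hB : B.IsSymm) (hE : B E E = 0)
    (hP : B P P = 0) (hPE : B P E = 1) {U : M} (hU : B U U = 1) (hw : B U E ≠ 0) :
    B.ofUpperHalfSpace E P (B.toUpperHalfSpace E P U) = U := by
  have hU' := apply_self_eq_orthogonalPart_add hB hE hP hPE U
  dsimp only [toUpperHalfSpace, ofUpperHalfSpace]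
  set u := B.orthogonalPart E P U with hu
  have hv : ((B U E)⁻¹ - (B U E)⁻¹⁻¹ * B ((B U E)⁻¹ • u) ((B U E)⁻¹ • u)) / 2 = B U P := by
    simp only [smul_left, smul_right, inv_inv]
    field_simp
    linear_combination hU' - hU
  rw [hv, inv_inv, smul_smul, mul_inv_cancel₀ hw, one_smul, hu, orthogonalPart]
  abel

end Field

theorem bijOn_toUpperHalfSpace {K M : Type*} [Field K] [LinearOrder K] [IsStrictOrderedRing K]
    [AddCommGroup M] [Module K M] {B : LinearMap.BilinForm K M} {E P : M} (hB : B.IsSymm)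
    (hE : B E E = 0) (hP : B P P = 0) (hPE : B P E = 1) :
    Set.BijOn (B.toUpperHalfSpace E P) {U | B U U = 1 ∧ 0 < B U E}
      ({y | B y E = 0 ∧ B y P = 0} ×ˢ Set.Ioi 0) := by
  refine Set.InvOn.bijOn (f' := B.ofUpperHalfSpace E P) ⟨?_, ?_⟩ ?_ ?_
  · rintro U ⟨hU, hw⟩
    exact ofUpperHalfSpace_toUpperHalfSpace hB hE hP hPE hU hw.ne'
  · rintro ⟨y, t⟩ ⟨⟨hyE, hyP⟩, ht⟩
    exact toUpperHalfSpace_ofUpperHalfSpace hB hE hP hPE hyE hyP ht.ne'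
  · rintro U ⟨-, hw⟩
    refine ⟨⟨?_, ?_⟩, inv_pos.mpr hw⟩ <;> simp only [toUpperHalfSpace, smul_left]
    · rw [orthogonalPart_apply_E hE hPE, mul_zero]
    · rw [orthogonalPart_apply_P hB hP hPE, mul_zero]
  · rintro ⟨y, t⟩ ⟨⟨hyE, hyP⟩, ht⟩
    refine ⟨ofUpperHalfSpace_apply_self hB hE hP hPE hyE hyP ht.ne', ?_⟩
    rw [ofUpperHalfSpace_apply_E hE hPE hyE]
    exact inv_pos.mpr ht

end LinearMap.BilinForm

noncomputable def minkForm (n : ℕ) : LinearMap.BilinForm ℝ (Fin (n + 1) → ℝ) :=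
  LinearMap.mk₂ ℝ (mink n)
    (fun x y z => by simp only [mink, Pi.add_apply, add_mul, Finset.sum_add_distrib]; ring)
    (fun c x y => by simp only [mink, Pi.smul_apply, smul_eq_mul, mul_sub, Finset.mul_sum,
      mul_assoc])
    (fun x y z => by simp only [mink, Pi.add_apply, mul_add, Finset.sum_add_distrib]; ring)
    (fun c x y => by simp only [mink, Pi.smul_apply, smul_eq_mul, mul_sub, Finset.mul_sum,
      mul_left_comm])

theorem minkForm_isSymm (n : ℕ) : (minkForm n).IsSymm :=
  ⟨fun x y => by simp only [minkForm, LinearMap.mk₂_apply, mink, mul_comm]⟩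

theorem upper_half_space_bijection_general (n : ℕ)
    (E P : Fin (n + 1) → ℝ)
    (hE : mink n E E = 0) (hP : mink n P P = 0) (hPE : mink n P E = 1) :
    Set.BijOn
      (fun U : Fin (n + 1) → ℝ =>
        (((mink n U E)⁻¹ • (U - mink n U E • P - mink n U P • E) :
            Fin (n + 1) → ℝ),
          (mink n U E)⁻¹))
      {U | mink n U U = 1 ∧ 0 < mink n U E}
      (({x | mink n x E = 0 ∧ mink n x P = 0} : Set (Fin (n + 1) → ℝ)) ×ˢ
        Set.Ioi (0 : ℝ)) :=
  -- `minkForm n x y` unfolds to `mink n x y`, so the map is `toUpperHalfSpace` by definition.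
  LinearMap.BilinForm.bijOn_toUpperHalfSpace (minkForm_isSymm n) hE hP hPE

/-- The map `U = wP + vE + u ↦ (u/w, 1/w)` is a bijection from the sheet
`H⁺ = {U : ⟨U,U⟩ = 1, ⟨U,E⟩ > 0}` of the unit hyperboloid onto `W × (0,∞)`. -/
theorem upper_half_space_bijection (n : ℕ) (hn : 1 ≤ n)
    (E P : Fin (n + 1) → ℝ)
    (hE : mink n E E = 0) (hP : mink n P P = 0) (hPE : mink n P E = 1) :
    Set.BijOn
      (fun U : Fin (n + 1) → ℝ =>
        (((mink n U E)⁻¹ • (U - mink n U E • P - mink n U P • E) :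
            Fin (n + 1) → ℝ),
          (mink n U E)⁻¹))
      {U | mink n U U = 1 ∧ 0 < mink n U E}
      (({x | mink n x E = 0 ∧ mink n x P = 0} : Set (Fin (n + 1) → ℝ)) ×ˢ
        Set.Ioi (0 : ℝ)) :=
  upper_half_space_bijection_general n E P hE hP hPE
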